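/- For every complex x with x ≠ 0 and x ≠ −1, one has R̃₁₂(x+1) R̃₁₃(x) R₂₃(1) = (1 − (P̃₁₂ + P̃₁₃) x⁻¹)(1 − P₂₃) as operators on (ℂⁿ)^{⊗3}. -/

import Mathlib

noncomputable section
open scoped Kronecker
open Matrix

/-- Square matrices acting on the tensor power `(ℂⁿ)^{⊗ι}`, modelled on the
function basis `ι → Fin n`. -/
abbrev TMat (ι : Type) (n : ℕ) := Matrix (ι → Fin n) (ι → Fin n) ℂ

/-- The matrix units `E_{ij}` of `End(ℂⁿ)`. -/
def matE (n : ℕ) (i j : Fin n) : Matrix (Fin n) (Fin n) ℂ := Matrix.single i j 1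

/-- The flip `P = Σ E_{ij} ⊗ E_{ji}` on `ℂⁿ ⊗ ℂⁿ`. -/
def flipP (n : ℕ) : Matrix (Fin n × Fin n) (Fin n × Fin n) ℂ :=
  ∑ i : Fin n, ∑ j : Fin n, matE n i j ⊗ₖ matE n j i

/-- `P̄ = Σ E_{ij} ⊗ E_{ij}` on `ℂⁿ ⊗ ℂⁿ`. -/
def PbarM (n : ℕ) : Matrix (Fin n × Fin n) (Fin n × Fin n) ℂ :=
  ∑ i : Fin n, ∑ j : Fin n, matE n i j ⊗ₖ matE n i j

/-- The conjugate `X̃ = G⁻¹ Xᵀ G` of `X` relative to the bilinear form with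
Gram matrix `G`, i.e. `⟨X u, v⟩ = ⟨u, X̃ v⟩` where `⟨u, v⟩ = uᵀ G v`. -/
def conjF {n : ℕ} (G X : Matrix (Fin n) (Fin n) ℂ) : Matrix (Fin n) (Fin n) ℂ :=
  G⁻¹ * Xᵀ * G

/-- `P̃ = Σ Ẽ_{ij} ⊗ E_{ji}`. -/
def PtilM (n : ℕ) (G : Matrix (Fin n) (Fin n) ℂ) : Matrix (Fin n × Fin n) (Fin n × Fin n) ℂ :=
  ∑ i : Fin n, ∑ j : Fin n, conjF G (matE n i j) ⊗ₖ matE n j i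

/-- `P̂ = Σ Ẽ_{ij} ⊗ E_{ij}`. -/
def PhatM (n : ℕ) (G : Matrix (Fin n) (Fin n) ℂ) : Matrix (Fin n × Fin n) (Fin n × Fin n) ℂ :=
  ∑ i : Fin n, ∑ j : Fin n, conjF G (matE n i j) ⊗ₖ matE n i j

/-- The Yang R-matrix `R(x) = 1 − P x⁻¹`. -/
def Rm (n : ℕ) (x : ℂ) : Matrix (Fin n × Fin n) (Fin n × Fin n) ℂ := 1 - x⁻¹ • flipP n

/-- `R̄(x) = 1 − P̄ x⁻¹`. -/
def RbarM (n : ℕ) (x : ℂ) : Matrix (Fin n × Fin n) (Fin n × Fin n) ℂ := 1 - x⁻¹ • PbarM n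

/-- `R̃(x) = 1 − P̃ x⁻¹`. -/
def RtilM (n : ℕ) (G : Matrix (Fin n) (Fin n) ℂ) (x : ℂ) :
    Matrix (Fin n × Fin n) (Fin n × Fin n) ℂ := 1 - x⁻¹ • PtilM n G

/-- `R̂(x) = 1 − P̂ x⁻¹`. -/
def RhatM (n : ℕ) (G : Matrix (Fin n) (Fin n) ℂ) (x : ℂ) :
    Matrix (Fin n × Fin n) (Fin n × Fin n) ℂ := 1 - x⁻¹ • PhatM n G

/-- `Z_{ij}` : the operator on a tensor power of `ℂⁿ` acting as the two-factor
operator `Z` in the `i`-th and `j`-th tensor factors and as the identity elsewhere. -/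
def lift2 {n : ℕ} {ι : Type} [Fintype ι] [DecidableEq ι] (i j : ι)
    (Z : Matrix (Fin n × Fin n) (Fin n × Fin n) ℂ) : TMat ι n :=
  fun f g => Z (f i, f j) (g i, g j) *
    ∏ p : ι, if p = i ∨ p = j then 1 else (if f p = g p then 1 else 0)

/-!
Write `A = P̃₁₂`, `B = P̃₁₃`, `C = P₂₃`. Multiplying out, the two sides differ by
`x⁻¹(x+1)⁻¹ (A + A B)(1 - C)`, which vanishes as soon as `C² = 1` and `A B = A C`, since then
`A B (1 - C) = A C - A`. The relation `A B = A C` holds because `P̃` has rank one, with entries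
`P̃_{(a,b),(c,d)} = G⁻¹_{ab} G_{dc}`: in `P̃₁₂ P̃₁₃` the summed index pairs `G` with `G⁻¹`, leaving
the Kronecker delta that `P₂₃` produces.
-/

lemma Fintype.sum_fin_succ_pi {α M : Type*} [Fintype α] [AddCommMonoid M] {m : ℕ}
    (F : (Fin (m + 1) → α) → M) : ∑ g, F g = ∑ a, ∑ t : Fin m → α, F (Fin.cons a t) := by
  rw [← (Fin.consEquiv fun _ => α).sum_comp, Fintype.sum_prod_type]
  rfl

lemma Fintype.sum_fin_three_pi {α M : Type*} [Fintype α] [AddCommMonoid M]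
    (F : (Fin 3 → α) → M) : ∑ g, F g = ∑ a, ∑ b, ∑ c, F ![a, b, c] := by
  simp only [Fintype.sum_fin_succ_pi, Fintype.sum_unique]
  rfl

lemma flipP_apply (n : ℕ) (p q : Fin n × Fin n) :
    flipP n p q = if p.1 = q.2 ∧ p.2 = q.1 then 1 else 0 := by
  simp [flipP, Matrix.sum_apply, matE, Matrix.single, ite_and, eq_comm]

lemma PtilM_apply (n : ℕ) (G : Matrix (Fin n) (Fin n) ℂ) (p q : Fin n × Fin n) :
    PtilM n G p q = G⁻¹ p.1 p.2 * G q.2 q.1 := by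
  simp [PtilM, Matrix.sum_apply, conjF, matE, Matrix.mul_apply, Matrix.single,
    ite_and, mul_ite, ite_mul]

section lift2

variable {n : ℕ} {ι : Type} [Fintype ι] [DecidableEq ι] (i j : ι)

lemma lift2_one : lift2 i j (1 : Matrix (Fin n × Fin n) (Fin n × Fin n) ℂ) = 1 := by
  ext f g
  by_cases hfg : f = g
  · subst hfg; simp [lift2]
  obtain ⟨p, hp⟩ := Function.ne_iff.mp hfg
  rw [Matrix.one_apply_ne hfg, lift2]
  by_cases hpij : p = i ∨ p = j
  · rcases hpij with rfl | rfl <;> simp [hp]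
  · exact mul_eq_zero_of_right _ (Finset.prod_eq_zero (Finset.mem_univ p) (by simp [hpij, hp]))

lemma lift2_sub (Y Z : Matrix (Fin n × Fin n) (Fin n × Fin n) ℂ) :
    lift2 i j (Y - Z) = lift2 i j Y - lift2 i j Z := by
  ext f g; simp [lift2, sub_mul]

lemma lift2_smul (c : ℂ) (Z : Matrix (Fin n × Fin n) (Fin n × Fin n) ℂ) :
    lift2 i j (c • Z) = c • lift2 i j Z := by
  ext f g; simp [lift2, mul_assoc]

end lift2

section ThreeFactors

variable {n : ℕ} (Z : Matrix (Fin n × Fin n) (Fin n × Fin n) ℂ) (f g : Fin 3 → Fin n)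

lemma lift2_zero_one_apply :
    lift2 (0 : Fin 3) 1 Z f g = if f 2 = g 2 then Z (f 0, f 1) (g 0, g 1) else 0 := by
  simp [lift2, Fin.prod_univ_three]

lemma lift2_zero_two_apply :
    lift2 (0 : Fin 3) 2 Z f g = if f 1 = g 1 then Z (f 0, f 2) (g 0, g 2) else 0 := by
  simp [lift2, Fin.prod_univ_three]

lemma lift2_one_two_apply :
    lift2 (1 : Fin 3) 2 Z f g = if f 0 = g 0 then Z (f 1, f 2) (g 1, g 2) else 0 := by
  simp [lift2, Fin.prod_univ_three]

end ThreeFactors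

lemma flip23_mul_self (n : ℕ) :
    lift2 (1 : Fin 3) 2 (flipP n) * lift2 (1 : Fin 3) 2 (flipP n) = 1 := by
  ext f h
  rw [Matrix.mul_apply, Fintype.sum_fin_three_pi]
  simp [lift2_one_two_apply, flipP_apply, Matrix.one_apply, funext_iff, Fin.forall_fin_succ,
    ite_and, mul_ite, Finset.sum_ite_eq']

lemma ptil12_mul_flip23_apply (n : ℕ) (G : Matrix (Fin n) (Fin n) ℂ) (f h : Fin 3 → Fin n) :
    (lift2 (0 : Fin 3) 1 (PtilM n G) * lift2 (1 : Fin 3) 2 (flipP n)) f h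
      = if f 2 = h 1 then G⁻¹ (f 0) (f 1) * G (h 2) (h 0) else 0 := by
  rw [Matrix.mul_apply, Fintype.sum_fin_three_pi]
  simp [lift2_zero_one_apply, lift2_one_two_apply, PtilM_apply, flipP_apply,
    ite_and, mul_ite, Finset.sum_ite_eq']

lemma ptil12_mul_ptil13_apply (n : ℕ) (G : Matrix (Fin n) (Fin n) ℂ) (hG : IsUnit G.det)
    (f h : Fin 3 → Fin n) :
    (lift2 (0 : Fin 3) 1 (PtilM n G) * lift2 (0 : Fin 3) 2 (PtilM n G)) f h
      = if f 2 = h 1 then G⁻¹ (f 0) (f 1) * G (h 2) (h 0) else 0 := by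
  rw [Matrix.mul_apply, Fintype.sum_fin_three_pi]
  simp only [lift2_zero_one_apply, cons_val, cons_val_zero, cons_val_one, PtilM_apply,
    lift2_zero_two_apply, mul_ite, ite_mul, zero_mul, mul_zero, Finset.sum_ite_irrel,
    Finset.sum_ite_eq, Finset.mem_univ, ↓reduceIte, Finset.sum_const_zero, Finset.sum_ite_eq']
  calc ∑ a, G⁻¹ (f 0) (f 1) * G (h 1) a * (G⁻¹ a (f 2) * G (h 2) (h 0))
      = G⁻¹ (f 0) (f 1) * G (h 2) (h 0) * (G * G⁻¹) (h 1) (f 2) := by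
        rw [Matrix.mul_apply, Finset.mul_sum]
        exact Finset.sum_congr rfl fun a _ => by ring
    _ = _ := by simp [Matrix.mul_nonsing_inv G hG, Matrix.one_apply, eq_comm]

lemma ptil12_mul_ptil13 (n : ℕ) (G : Matrix (Fin n) (Fin n) ℂ) (hG : IsUnit G.det) :
    lift2 (0 : Fin 3) 1 (PtilM n G) * lift2 (0 : Fin 3) 2 (PtilM n G)
      = lift2 (0 : Fin 3) 1 (PtilM n G) * lift2 (1 : Fin 3) 2 (flipP n) := by
  ext f h
  rw [ptil12_mul_ptil13_apply n G hG, ptil12_mul_flip23_apply]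

lemma one_sub_inv_smul_fusion {A : Type*} [Ring A] [Algebra ℂ A] {P Q S : A}
    (hS : S * S = 1) (hPQ : P * Q = P * S) {x : ℂ} (hx : x ≠ 0) (hx1 : x + 1 ≠ 0) :
    (1 - (x + 1)⁻¹ • P) * (1 - x⁻¹ • Q) * (1 - S) = (1 - x⁻¹ • (P + Q)) * (1 - S) := by
  have hPQS : P * Q * S = P := by rw [hPQ, mul_assoc, hS, mul_one]
  simp only [mul_sub, sub_mul, mul_one, one_mul, smul_mul_assoc, mul_smul_comm,
    add_mul, smul_add, hPQS]
  rw [hPQ]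
  match_scalars <;> field_simp <;> ring

theorem stmt7_general (n : ℕ) (G : Matrix (Fin n) (Fin n) ℂ)
    (hG : IsUnit G.det)
    (x : ℂ) (hx : x ≠ 0) (hx' : x ≠ -1) :
    lift2 (0 : Fin 3) 1 (RtilM n G (x + 1)) * lift2 (0 : Fin 3) 2 (RtilM n G x) *
      lift2 (1 : Fin 3) 2 (Rm n 1)
  = (1 - x⁻¹ • (lift2 (0 : Fin 3) 1 (PtilM n G) + lift2 (0 : Fin 3) 2 (PtilM n G))) *
      (1 - lift2 (1 : Fin 3) 2 (flipP n)) := by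
  simp only [RtilM, Rm, lift2_sub, lift2_smul, lift2_one, inv_one, one_smul]
  exact one_sub_inv_smul_fusion (flip23_mul_self n) (ptil12_mul_ptil13 n G hG) hx
    (fun h => hx' (eq_neg_of_add_eq_zero_left h))

/-- `R̃₁₂(x+1) R̃₁₃(x) R₂₃(1) = (1 − (P̃₁₂ + P̃₁₃) x⁻¹)(1 − P₂₃)` on `(ℂⁿ)^{⊗3}`. -/
theorem stmt7 (n : ℕ) (hn : 1 ≤ n) (G : Matrix (Fin n) (Fin n) ℂ)
    (hG : IsUnit G.det) (hform : Gᵀ = G ∨ Gᵀ = -G)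
    (x : ℂ) (hx : x ≠ 0) (hx' : x ≠ -1) :
    lift2 (0 : Fin 3) 1 (RtilM n G (x + 1)) * lift2 (0 : Fin 3) 2 (RtilM n G x) *
      lift2 (1 : Fin 3) 2 (Rm n 1)
  = (1 - x⁻¹ • (lift2 (0 : Fin 3) 1 (PtilM n G) + lift2 (0 : Fin 3) 2 (PtilM n G))) *
      (1 - lift2 (1 : Fin 3) 2 (flipP n)) :=
  stmt7_general n G hG x hx hx'
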